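/- Let J ≥ 2 and let Ξ : (ℝ²)^J \ D_J → ℝ be defined by Ξ(z₁,…,z_J) = Σ_{i≠j} α_{ij} · ln(1/|z_i − z_j|), where D_J = {(z₁,…,z_J) : ∃ i ≠ j, z_i = z_j} and α_{ij} > 0 for all i ≠ j. Then Ξ has no critical points: for every (z₁,…,z_J) with pairwise distinct entries, the gradient of Ξ is nonzero. -/

import Mathlib

/-! Ξ is logarithmically homogeneous: dilating a configuration by `c > 0` multiplies every
distance by `c`, so `Ξ(c z) = Ξ(z) - S log c` with `S = Σ_{i≠j} α_{ij} > 0`. Differentiating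
at `c = 1` (Euler's relation) gives `DΞ(z) z = -S ≠ 0`: the derivative in the radial
direction never vanishes. -/

open Real

section LogEnergy

variable {ι E : Type*} [Fintype ι] [DecidableEq ι] [NormedAddCommGroup E] [NormedSpace ℝ E]

noncomputable def logEnergy (α : ι → ι → ℝ) (w : ι → E) : ℝ :=
  ∑ i, ∑ j, if i = j then 0 else α i j * log (1 / dist (w i) (w j))

def offDiagSum (α : ι → ι → ℝ) : ℝ :=
  ∑ i, ∑ j, if i = j then 0 else α i j

theorem offDiagSum_pos [Nontrivial ι] {α : ι → ι → ℝ} (hα : ∀ i j, i ≠ j → 0 < α i j) :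
    0 < offDiagSum α := by
  obtain ⟨i, j, hij⟩ := exists_pair_ne ι
  have hnonneg : ∀ k l : ι, 0 ≤ if k = l then 0 else α k l := fun k l => by
    split_ifs with hkl
    exacts [le_rfl, (hα k l hkl).le]
  refine Finset.sum_pos' (fun k _ => Finset.sum_nonneg fun l _ => hnonneg k l)
    ⟨i, Finset.mem_univ _, Finset.sum_pos' (fun l _ => hnonneg i l) ⟨j, Finset.mem_univ _, ?_⟩⟩
  simpa [hij] using hα i j hij

theorem log_one_div_dist_smul {x y : E} (hxy : x ≠ y) {c : ℝ} (hc : 0 < c) :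
    log (1 / dist (c • x) (c • y)) = log (1 / dist x y) - log c := by
  rw [dist_smul₀, Real.norm_of_nonneg hc.le, one_div, one_div, log_inv, log_inv,
    log_mul hc.ne' (dist_ne_zero.2 hxy)]
  ring

theorem logEnergy_smul (α : ι → ι → ℝ) {w : ι → E} (hw : Function.Injective w) {c : ℝ}
    (hc : 0 < c) : logEnergy α (c • w) = logEnergy α w - offDiagSum α * log c := by
  simp only [logEnergy, offDiagSum, Finset.sum_mul, ← Finset.sum_sub_distrib]
  refine Finset.sum_congr rfl fun i _ => Finset.sum_congr rfl fun j _ => ?_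
  split_ifs with hij
  · ring
  · rw [Pi.smul_apply, Pi.smul_apply, log_one_div_dist_smul (hw.ne hij) hc]
    ring

end LogEnergy

theorem HasFDerivAt.apply_self_eq_of_log_homogeneous {E : Type*} [NormedAddCommGroup E]
    [NormedSpace ℝ E] {f : E → ℝ} {f' : E →L[ℝ] ℝ} {x : E} {S : ℝ} (hf : HasFDerivAt f f' x)
    (hhom : ∀ c : ℝ, 0 < c → f (c • x) = f x - S * Real.log c) : f' x = -S := by
  have hray : HasDerivAt (fun c : ℝ => f (c • x)) (f' x) 1 :=
    hf.comp_hasDerivAt_of_eq 1 (by simpa using (hasDerivAt_id (1 : ℝ)).smul_const x)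
      (one_smul ℝ x).symm
  have hlog : HasDerivAt (fun c : ℝ => f x - S * Real.log c) (-S) 1 := by
    simpa using ((hasDerivAt_log one_ne_zero).const_mul S).const_sub (f x)
  have heq : (fun c : ℝ => f (c • x)) =ᶠ[nhds 1] fun c => f x - S * Real.log c :=
    Filter.eventually_of_mem (Ioi_mem_nhds one_pos) hhom
  exact hray.unique (hlog.congr_of_eventuallyEq heq)

theorem no_critical_points_plane (J : ℕ) (hJ : 2 ≤ J)
    (α : Fin J → Fin J → ℝ) (hα : ∀ i j, i ≠ j → 0 < α i j)
    (z : Fin J → EuclideanSpace ℝ (Fin 2)) (hz : Function.Injective z) :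
    ¬ HasFDerivAt
        (fun w : Fin J → EuclideanSpace ℝ (Fin 2) =>
          ∑ i : Fin J, ∑ j : Fin J,
            if i = j then 0 else α i j * Real.log (1 / dist (w i) (w j)))
        (0 : (Fin J → EuclideanSpace ℝ (Fin 2)) →L[ℝ] ℝ) z := by
  intro h
  have : Nontrivial (Fin J) := Fin.nontrivial_iff_two_le.2 hJ
  have hradial : (0 : (Fin J → EuclideanSpace ℝ (Fin 2)) →L[ℝ] ℝ) z = -offDiagSum α :=
    HasFDerivAt.apply_self_eq_of_log_homogeneous (f := logEnergy α) h
      fun _ hc => logEnergy_smul α hz hc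
  rw [zero_apply] at hradial
  linarith [offDiagSum_pos hα]
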